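/- arXiv:1905.12963 — 5 statements merged into one kernel-verified Lean document; each statement's English description precedes it below -/
import Mathlib

section
/- Let M = (S, Σ, →, q) be an LTS and let Σ₁, Σ₂ be alphabets with Σ = Σ₁ ∪ Σ₂ and Σ₁ ∩ Σ₂ = ∅. Let (M₁, M₂) = decomp_s(M, Σ₁, Σ₂) be the synchronous decomposition of M, and let M_x = M₁ × M₂ be the synchronous product of M₁ and M₂. Then M and M_x are branching bisimilar, i.e. M ↔_b M_x. -/
/-- A labelled transition system over a type of actions `Act`.
The internal action τ is represented by `none` in the labels `Option Act`. -/
structure LTS (Act : Type) : Type 1 where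
  State : Type
  alphabet : Set Act
  tr : State → Option Act → State → Prop
  init : State

/-- A finite (possibly empty) sequence of τ-transitions. -/
def tauStar {Act S : Type} (tr : S → Option Act → S → Prop) : S → S → Prop :=
  Relation.ReflTransGen fun x y => tr x none y

/-- `R` is a branching bisimulation relation for the transition relation `tr`. -/
def IsBranchingBisimulation {Act S : Type} (tr : S → Option Act → S → Prop)
    (R : S → S → Prop) : Prop :=
  ∀ s t, R s t →
    (∀ a s', tr s a s' →
      (a = none ∧ R s' t) ∨
      ∃ t' t'', tauStar tr t t' ∧ tr t' a t'' ∧ R s t' ∧ R s' t'') ∧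
    (∀ a t', tr t a t' →
      (a = none ∧ R s t') ∨
      ∃ s' s'', tauStar tr s s' ∧ tr s' a s'' ∧ R s' t ∧ R s'' t')

/-- The transition relation of the disjoint union of two LTSs. -/
def sumTr {Act : Type} (M N : LTS Act) :
    M.State ⊕ N.State → Option Act → M.State ⊕ N.State → Prop :=
  fun x a y =>
    match x, y with
    | .inl s, .inl s' => M.tr s a s'
    | .inr t, .inr t' => N.tr t a t'
    | _, _ => False

/-- Two LTSs are branching bisimilar iff their initial states are related by some
branching bisimulation relation on their disjoint union. -/
def BranchingBisimilar {Act : Type} (M N : LTS Act) : Prop :=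
  ∃ R, IsBranchingBisimulation (sumTr M N) R ∧ R (Sum.inl M.init) (Sum.inr N.init)

/-- The synchronous product of two LTSs, where `bar` is the co-action map:
complementary communications become τ-steps. -/
def sync {Act : Type} (bar : Act → Act) (M N : LTS Act) : LTS Act where
  State := M.State × N.State
  alphabet := (M.alphabet ∪ N.alphabet) \
    {x | (x ∈ M.alphabet ∧ bar x ∈ N.alphabet) ∨ (bar x ∈ M.alphabet ∧ x ∈ N.alphabet)}
  tr := fun x l y =>
    (∃ a, l = some a ∧ a ∈ M.alphabet ∧ bar a ∉ N.alphabet ∧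
        M.tr x.1 (some a) y.1 ∧ y.2 = x.2) ∨
    (∃ a, l = some a ∧ a ∈ N.alphabet ∧ bar a ∉ M.alphabet ∧
        N.tr x.2 (some a) y.2 ∧ y.1 = x.1) ∨
    (l = none ∧ ∃ a, a ∈ M.alphabet ∧ bar a ∈ N.alphabet ∧
        M.tr x.1 (some a) y.1 ∧ N.tr x.2 (bar a) y.2)
  init := (M.init, N.init)

/-- As in the paper's definition of an LTS, every transition is labelled by an
action from the alphabet (in particular there are no τ-transitions). -/
def WfLTS {Act : Type} (M : LTS Act) : Prop :=
  ∀ s a s', M.tr s a s' → ∃ b ∈ M.alphabet, a = some b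

/-- The extended action universe used by the decompositions: base actions of type `A`
and their (fresh) co-actions, together with fresh c-actions `c s i` (read `c_{s_i,s_j}`
with `j ≠ i`), t-actions `t s i` (read `t_{s_i}`) and their co-actions, indexed by a
source state `s : S` and a component index (`true` = ↑/component 1,
`false` = ↓/component 2). -/
inductive DAct (A S : Type) : Type where
  | act : A → DAct A S
  | coact : A → DAct A S
  | c : S → Bool → DAct A S
  | cbar : S → Bool → DAct A S
  | t : S → Bool → DAct A S
  | tbar : S → Bool → DAct A S

/-- The involutive co-action map on `DAct`. -/
def DAct.bar {A S : Type} : DAct A S → DAct A S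
  | .act a => .coact a
  | .coact a => .act a
  | .c s i => .cbar s i
  | .cbar s i => .c s i
  | .t s i => .tbar s i
  | .tbar s i => .t s i

/-- Control states `s_i` and t-states `t_{a,s_i}` of the decomposition components. -/
inductive DState (A S : Type) : Type where
  | ctrl : S → Bool → DState A S
  | tst : A → S → Bool → DState A S

/-- The alphabet of component `k`: its part `Si` of the base alphabet together with
its c-actions, received co-c-actions, t-actions and received co-t-actions. -/
def decompAlphabet {A S : Type} (Si : Set A) (k : Bool) : Set (DAct A S) :=
  {x | (∃ a ∈ Si, x = DAct.act a) ∨ (∃ s : S, x = DAct.c s k) ∨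
       (∃ s : S, x = DAct.cbar s (!k)) ∨ (∃ s : S, x = DAct.t s k) ∨
       (∃ s : S, x = DAct.tbar s (!k))}

/-- The original LTS viewed over the extended action universe `DAct A M.State`. -/
def liftLTS {A : Type} (M : LTS A) : LTS (DAct A M.State) where
  State := M.State
  alphabet := {x | ∃ a ∈ M.alphabet, x = DAct.act a}
  tr := fun s l s' => ∃ b, M.tr s b s' ∧ l = Option.map DAct.act b
  init := M.init

/-- The transition relation of component `k` of the synchronous decomposition
`decomp_s` (`true` = component 1/index ↑, `false` = component 2/index ↓):
(a) control is passed via c-actions (`sendC` in the component itself, `recvC` in the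
opposite component); (b) every transition `s →a s'` of the source with `a` in the
component's alphabet part yields `s_k →a t_{a,s'_k} →t_{s'_k} s'_k` in the component
and `s_k →t̄_{s'_k} s'_k` in the opposite component. -/
inductive decompSTr {A S : Type} (tr : S → Option A → S → Prop) (S1 S2 : Set A) :
    Bool → DState A S → Option (DAct A S) → DState A S → Prop where
  | sendC (s : S) (k : Bool) :
      decompSTr tr S1 S2 k (.ctrl s k) (some (.c s k)) (.ctrl s (!k))
  | recvC (s : S) (k : Bool) :
      decompSTr tr S1 S2 k (.ctrl s (!k)) (some (.cbar s (!k))) (.ctrl s k)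
  | doAct {s s' : S} {a : A} (k : Bool) :
      a ∈ (if k then S1 else S2) → tr s (some a) s' →
      decompSTr tr S1 S2 k (.ctrl s k) (some (.act a)) (.tst a s' k)
  | doT {s s' : S} {a : A} (k : Bool) :
      a ∈ (if k then S1 else S2) → tr s (some a) s' →
      decompSTr tr S1 S2 k (.tst a s' k) (some (.t s' k)) (.ctrl s' k)
  | recvT {s s' : S} {a : A} (k : Bool) :
      a ∈ (if k then S2 else S1) → tr s (some a) s' →
      decompSTr tr S1 S2 k (.ctrl s (!k)) (some (.tbar s' (!k))) (.ctrl s' (!k))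

/-- Component `k` of the synchronous decomposition `decomp_s M Σ1 Σ2`. -/
def decompS {A : Type} (M : LTS A) (S1 S2 : Set A) (k : Bool) : LTS (DAct A M.State) where
  State := DState A M.State
  alphabet := decompAlphabet (if k then S1 else S2) k
  tr := decompSTr M.tr S1 S2 k
  init := .ctrl M.init true

namespace DecompSProof

variable {A : Type}

@[simp] lemma mem_decompAct {S : Type} {Si : Set A} {k : Bool} {a : A} :
    DAct.act a ∈ (decompAlphabet Si k : Set (DAct A S)) ↔ a ∈ Si := by
  simp [decompAlphabet]

@[simp] lemma not_mem_decompCoact {S : Type} {Si : Set A} {k : Bool} {a : A} :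
    DAct.coact a ∉ (decompAlphabet Si k : Set (DAct A S)) := by
  simp [decompAlphabet]

@[simp] lemma mem_decompC {S : Type} {Si : Set A} {k i : Bool} {s : S} :
    DAct.c s i ∈ (decompAlphabet Si k : Set (DAct A S)) ↔ i = k := by
  simp [decompAlphabet]

@[simp] lemma mem_decompCbar {S : Type} {Si : Set A} {k i : Bool} {s : S} :
    DAct.cbar s i ∈ (decompAlphabet Si k : Set (DAct A S)) ↔ i = !k := by
  simp [decompAlphabet]

@[simp] lemma mem_decompT {S : Type} {Si : Set A} {k i : Bool} {s : S} :
    DAct.t s i ∈ (decompAlphabet Si k : Set (DAct A S)) ↔ i = k := by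
  simp [decompAlphabet]

@[simp] lemma mem_decompTbar {S : Type} {Si : Set A} {k i : Bool} {s : S} :
    DAct.tbar s i ∈ (decompAlphabet Si k : Set (DAct A S)) ↔ i = !k := by
  simp [decompAlphabet]

end DecompSProof

namespace DecompSProof

section Steps
variable {A : Type} (M : LTS A) (S1 S2 : Set A)

/-- The transition relation of the synchronous product of the two components. -/
def PTr : (DState A M.State × DState A M.State) → Option (DAct A M.State) →
    (DState A M.State × DState A M.State) → Prop :=
  (sync DAct.bar (decompS M S1 S2 true) (decompS M S1 S2 false)).tr

lemma swap_true (s : M.State) :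
    PTr M S1 S2 (.ctrl s true, .ctrl s true) none (.ctrl s false, .ctrl s false) := by
  refine Or.inr (Or.inr ⟨rfl, DAct.c s true, ?_, ?_, ?_, ?_⟩)
  · simp [decompS]
  · simp [decompS, DAct.bar]
  · exact decompSTr.sendC s true
  · exact decompSTr.recvC s false

lemma swap_false (s : M.State) :
    PTr M S1 S2 (.ctrl s false, .ctrl s false) none (.ctrl s true, .ctrl s true) := by
  refine Or.inr (Or.inr ⟨rfl, DAct.cbar s false, ?_, ?_, ?_, ?_⟩)
  · simp [decompS]
  · simp [decompS, DAct.bar]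
  · exact decompSTr.recvC s true
  · exact decompSTr.sendC s false

lemma finish_true {a : A} {s₀ s' : M.State} (ha : a ∈ S1) (htr : M.tr s₀ (some a) s') :
    PTr M S1 S2 (.tst a s' true, .ctrl s₀ true) none (.ctrl s' true, .ctrl s' true) := by
  refine Or.inr (Or.inr ⟨rfl, DAct.t s' true, ?_, ?_, ?_, ?_⟩)
  · simp [decompS]
  · simp [decompS, DAct.bar]
  · exact decompSTr.doT true (by simpa using ha) htr
  · exact decompSTr.recvT false (by simpa using ha) htr

lemma finish_false {a : A} {s₀ s' : M.State} (ha : a ∈ S2) (htr : M.tr s₀ (some a) s') :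
    PTr M S1 S2 (.ctrl s₀ false, .tst a s' false) none (.ctrl s' false, .ctrl s' false) := by
  refine Or.inr (Or.inr ⟨rfl, DAct.tbar s' false, ?_, ?_, ?_, ?_⟩)
  · simp [decompS]
  · simp [decompS, DAct.bar]
  · exact decompSTr.recvT true (by simpa using ha) htr
  · exact decompSTr.doT false (by simpa using ha) htr

lemma act_true {a : A} {s s' : M.State} (ha : a ∈ S1) (htr : M.tr s (some a) s') :
    PTr M S1 S2 (.ctrl s true, .ctrl s true) (some (.act a))
      (.tst a s' true, .ctrl s true) := by
  refine Or.inl ⟨DAct.act a, rfl, ?_, ?_, ?_, rfl⟩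
  · simp [decompS, ha]
  · simp [decompS, DAct.bar]
  · exact decompSTr.doAct true (by simpa using ha) htr

lemma act_false {a : A} {s s' : M.State} (ha : a ∈ S2) (htr : M.tr s (some a) s') :
    PTr M S1 S2 (.ctrl s false, .ctrl s false) (some (.act a))
      (.ctrl s false, .tst a s' false) := by
  refine Or.inr (Or.inl ⟨DAct.act a, rfl, ?_, ?_, ?_, rfl⟩)
  · simp [decompS, ha]
  · simp [decompS, DAct.bar]
  · exact decompSTr.doAct false (by simpa using ha) htr

/-- The candidate relation between a source state and a pair of component states. -/
def Good (s : M.State) (p1 p2 : DState A M.State) : Prop :=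
  (∃ i, p1 = .ctrl s i ∧ p2 = .ctrl s i) ∨
  (∃ a s₀, a ∈ S1 ∧ M.tr s₀ (some a) s ∧ p1 = .tst a s true ∧ p2 = .ctrl s₀ true) ∨
  (∃ a s₀, a ∈ S2 ∧ M.tr s₀ (some a) s ∧ p1 = .ctrl s₀ false ∧ p2 = .tst a s false)

end Steps
end DecompSProof

namespace DecompSProof
section Back
variable {A : Type} (M : LTS A) (S1 S2 : Set A)

lemma back {s : M.State} {p1 p2 q1 q2 : DState A M.State} {l : Option (DAct A M.State)}
    (hG : Good M S1 S2 s p1 p2)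
    (h : PTr M S1 S2 (p1, p2) l (q1, q2)) :
    (l = none ∧ Good M S1 S2 s q1 q2) ∨
    ∃ a s', l = some (.act a) ∧ M.tr s (some a) s' ∧ Good M S1 S2 s' q1 q2 := by
  rcases h with ⟨a', rfl, hmem, hnbar, h1, h2⟩ | ⟨a', rfl, hmem, hnbar, h1, h2⟩ |
    ⟨rfl, a', hm1, hm2, h1, h2⟩
  · -- component 1 moves alone
    rcases hG with ⟨i, rfl, rfl⟩ | ⟨a, s₀, ha, htr₀, rfl, rfl⟩ | ⟨a, s₀, ha, htr₀, rfl, rfl⟩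
    · cases h1
      case sendC => exact absurd (by simp [decompS, DAct.bar]) hnbar
      case recvC => exact absurd (by simp [decompS, DAct.bar]) hnbar
      case doAct s₁' a₁ hm ht =>
        exact Or.inr ⟨a₁, s₁', rfl, ht, Or.inr (Or.inl ⟨a₁, s, by simpa using hm, ht, rfl, h2⟩)⟩
      case recvT s₁' a₁ hm ht => exact absurd (by simp [decompS, DAct.bar]) hnbar
    · cases h1
      case doT s₁ hm ht => exact absurd (by simp [decompS, DAct.bar]) hnbar
    · cases h1
      case recvC => exact absurd (by simp [decompS, DAct.bar]) hnbar
      case recvT s₁' a₁ hm ht => exact absurd (by simp [decompS, DAct.bar]) hnbar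
  · -- component 2 moves alone
    rcases hG with ⟨i, rfl, rfl⟩ | ⟨a, s₀, ha, htr₀, rfl, rfl⟩ | ⟨a, s₀, ha, htr₀, rfl, rfl⟩
    · cases h1
      case sendC => exact absurd (by simp [decompS, DAct.bar]) hnbar
      case recvC => exact absurd (by simp [decompS, DAct.bar]) hnbar
      case doAct s₁' a₁ hm ht =>
        exact Or.inr ⟨a₁, s₁', rfl, ht, Or.inr (Or.inr ⟨a₁, s, by simpa using hm, ht, h2, rfl⟩)⟩
      case recvT s₁' a₁ hm ht => exact absurd (by simp [decompS, DAct.bar]) hnbar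
    · cases h1
      case recvC => exact absurd (by simp [decompS, DAct.bar]) hnbar
      case recvT s₁' a₁ hm ht => exact absurd (by simp [decompS, DAct.bar]) hnbar
    · cases h1
      case doT s₁ hm ht => exact absurd (by simp [decompS, DAct.bar]) hnbar
  · -- synchronization: a tau step
    rcases hG with ⟨i, rfl, rfl⟩ | ⟨a, s₀, ha, htr₀, rfl, rfl⟩ | ⟨a, s₀, ha, htr₀, rfl, rfl⟩
    · cases h1
      case sendC =>
        simp only [DAct.bar] at h2
        cases h2
        case recvC => exact Or.inl ⟨rfl, Or.inl ⟨false, rfl, rfl⟩⟩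
      case recvC =>
        simp only [DAct.bar] at h2
        cases h2
        case sendC => exact Or.inl ⟨rfl, Or.inl ⟨true, rfl, rfl⟩⟩
      case doAct s₁' a₁ hm ht => exact absurd hm2 (by simp [decompS, DAct.bar])
      case recvT s₁' a₁ hm ht =>
        simp only [DAct.bar] at h2
        cases h2
    · cases h1
      case doT s₁ hm ht =>
        simp only [DAct.bar] at h2
        cases h2
        case recvT a₂ hm₂ ht₂ => exact Or.inl ⟨rfl, Or.inl ⟨true, rfl, rfl⟩⟩
    · cases h1
      case recvC =>
        simp only [DAct.bar] at h2
        cases h2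
      case recvT s₁' a₁ hm ht =>
        simp only [DAct.bar] at h2
        cases h2
        case doT s₂ hm₂ ht₂ => exact Or.inl ⟨rfl, Or.inl ⟨false, rfl, rfl⟩⟩

end Back
end DecompSProof

namespace DecompSProof
section Fwd
variable {A : Type} (M : LTS A) (S1 S2 : Set A)

lemma forward {s s' : M.State} {a₀ : A} (ha : a₀ ∈ S1 ∪ S2) (ht : M.tr s (some a₀) s')
    {p1 p2 : DState A M.State} (hG : Good M S1 S2 s p1 p2) :
    ∃ r1 r2 u1 u2, tauStar (PTr M S1 S2) (p1, p2) (r1, r2) ∧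
      PTr M S1 S2 (r1, r2) (some (.act a₀)) (u1, u2) ∧
      Good M S1 S2 s r1 r2 ∧ Good M S1 S2 s' u1 u2 := by
  rcases ha with ha | ha
  · refine ⟨.ctrl s true, .ctrl s true, .tst a₀ s' true, .ctrl s true, ?_,
      act_true M S1 S2 ha ht, Or.inl ⟨true, rfl, rfl⟩,
      Or.inr (Or.inl ⟨a₀, s, ha, ht, rfl, rfl⟩)⟩
    rcases hG with ⟨i, rfl, rfl⟩ | ⟨a, s₀, ha', htr₀, rfl, rfl⟩ | ⟨a, s₀, ha', htr₀, rfl, rfl⟩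
    · cases i
      · exact Relation.ReflTransGen.single (swap_false M S1 S2 s)
      · exact Relation.ReflTransGen.refl
    · exact Relation.ReflTransGen.single (finish_true M S1 S2 ha' htr₀)
    · exact Relation.ReflTransGen.head (finish_false M S1 S2 ha' htr₀)
        (Relation.ReflTransGen.single (swap_false M S1 S2 s))
  · refine ⟨.ctrl s false, .ctrl s false, .ctrl s false, .tst a₀ s' false, ?_,
      act_false M S1 S2 ha ht, Or.inl ⟨false, rfl, rfl⟩,
      Or.inr (Or.inr ⟨a₀, s, ha, ht, rfl, rfl⟩)⟩
    rcases hG with ⟨i, rfl, rfl⟩ | ⟨a, s₀, ha', htr₀, rfl, rfl⟩ | ⟨a, s₀, ha', htr₀, rfl, rfl⟩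
    · cases i
      · exact Relation.ReflTransGen.refl
      · exact Relation.ReflTransGen.single (swap_true M S1 S2 s)
    · exact Relation.ReflTransGen.head (finish_true M S1 S2 ha' htr₀)
        (Relation.ReflTransGen.single (swap_true M S1 S2 s))
    · exact Relation.ReflTransGen.single (finish_false M S1 S2 ha' htr₀)

end Fwd
end DecompSProof

/-- Theorem 1 of the paper: the synchronous decomposition operation `decomp_s`
maintains branching bisimilarity: `M ↔_b M₁ × M₂`. -/
theorem decompS_branchingBisimilar {A : Type} (M : LTS A) (S1 S2 : Set A)
    (hcov : M.alphabet = S1 ∪ S2) (hdisj : S1 ∩ S2 = ∅) (hwf : WfLTS M) :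
    BranchingBisimilar (liftLTS M)
      (sync DAct.bar (decompS M S1 S2 true) (decompS M S1 S2 false)) := by
  classical
  refine ⟨fun x y => ∃ s p1 p2, x = Sum.inl s ∧ y = Sum.inr (p1, p2) ∧
      DecompSProof.Good M S1 S2 s p1 p2, ?_, ?_⟩
  · rintro x y ⟨s, p1, p2, rfl, rfl, hG⟩
    constructor
    · rintro l y' htr
      cases y' with
      | inr _ => exact htr.elim
      | inl s' =>
        have htr' : (liftLTS M).tr s l s' := htr
        obtain ⟨b, hb, rfl⟩ := htr'
        obtain ⟨a₀, ha₀, rfl⟩ := hwf _ _ _ hb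
        right
        have hmem : a₀ ∈ S1 ∪ S2 := hcov ▸ ha₀
        obtain ⟨r1, r2, u1, u2, hst, hstep, hGr, hGu⟩ :=
          DecompSProof.forward M S1 S2 hmem hb hG
        refine ⟨Sum.inr (r1, r2), Sum.inr (u1, u2), ?_, hstep,
          ⟨s, r1, r2, rfl, rfl, hGr⟩, ⟨s', u1, u2, rfl, rfl, hGu⟩⟩
        exact Relation.ReflTransGen.lift Sum.inr (fun a b h => h) _ _ hst
    · rintro l y' htr
      cases y' with
      | inl _ => exact htr.elim
      | inr q =>
        obtain ⟨q1, q2⟩ := q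
        rcases DecompSProof.back M S1 S2 hG htr with ⟨rfl, hGq⟩ | ⟨a, s', rfl, ht, hGq⟩
        · exact Or.inl ⟨rfl, s, q1, q2, rfl, rfl, hGq⟩
        · exact Or.inr ⟨Sum.inl s, Sum.inl s', Relation.ReflTransGen.refl,
            ⟨some a, ht, rfl⟩, ⟨s, p1, p2, rfl, rfl, hG⟩, ⟨s', q1, q2, rfl, rfl, hGq⟩⟩
  · exact ⟨M.init, _, _, rfl, rfl, Or.inl ⟨true, rfl, rfl⟩⟩
end

section
/- There is a universal way of decomposing LTSs synchronously while maintaining branching bisimilarity: there exists a general decomposition operator G such that for every LTS M = (S, Σ, →, q) and all alphabets Σ₁, Σ₂ with Σ = Σ₁ ∪ Σ₂ and Σ₁ ∩ Σ₂ = ∅, writing (M₁, M₂) = G(M, Σ₁, Σ₂), the LTS M is branching bisimilar to the synchronous product M₁ × M₂. -/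
namespace SyncDecomp

/-- States of a decomposition component. -/
inductive CState (S : Type) : Type where
  | ctrl : S → CState S
  | busy : S → CState S
  | emit : S → CState S
  | locked : CState S

/-- Transition relation of component `k`. -/
inductive CTr {A : Type} (M : LTS A) (Si : Set A) (k : Bool) :
    CState M.State → Option (DAct A M.State) → CState M.State → Prop where
  | hs (s : M.State) : CTr M Si k (.ctrl s) (some (.t s k)) (.busy s)
  | doAct {s : M.State} {a : A} {s' : M.State} : a ∈ Si → M.tr s (some a) s' →
      CTr M Si k (.busy s) (some (.act a)) (.emit s')
  | cancel (s : M.State) : CTr M Si k (.busy s) (some (.c s k)) (.ctrl s)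
  | commit (s : M.State) : CTr M Si k (.emit s) (some (.c s k)) (.ctrl s)
  | lock (s : M.State) : CTr M Si k (.ctrl s) (some (.tbar s (!k))) .locked
  | unlock (u : M.State) : CTr M Si k .locked (some (.cbar u (!k))) (.ctrl u)

/-- Decomposition component `k` of `M` with alphabet part `Si`. -/
def comp {A : Type} (M : LTS A) (Si : Set A) (k : Bool) : LTS (DAct A M.State) where
  State := CState M.State
  alphabet := decompAlphabet Si k
  tr := CTr M Si k
  init := .ctrl M.init

@[simp] lemma act_mem {A S : Type} {Si : Set A} {k : Bool} {a : A} :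
    (DAct.act a : DAct A S) ∈ decompAlphabet Si k ↔ a ∈ Si := by
  simp [decompAlphabet]

lemma coact_not_mem {A S : Type} {Si : Set A} {k : Bool} {a : A} :
    (DAct.coact a : DAct A S) ∉ decompAlphabet Si k := by
  simp [decompAlphabet]

section
variable {A : Type} (M : LTS A) (S1 S2 : Set A)

/-- The synchronous product of the two components. -/
abbrev SP : LTS (DAct A M.State) := sync DAct.bar (comp M S1 true) (comp M S2 false)

lemma sync_tr_cases {Act : Type} (bar : Act → Act) (M N : LTS Act) {x y : M.State × N.State}
    {l : Option Act} (h : (sync bar M N).tr x l y) :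
    (∃ a, l = some a ∧ a ∈ M.alphabet ∧ bar a ∉ N.alphabet ∧
        M.tr x.1 (some a) y.1 ∧ y.2 = x.2) ∨
    (∃ a, l = some a ∧ a ∈ N.alphabet ∧ bar a ∉ M.alphabet ∧
        N.tr x.2 (some a) y.2 ∧ y.1 = x.1) ∨
    (l = none ∧ ∃ a, a ∈ M.alphabet ∧ bar a ∈ N.alphabet ∧
        M.tr x.1 (some a) y.1 ∧ N.tr x.2 (bar a) y.2) := h

/-- τ-steps of the product. -/
lemma tau_hs1 (s : M.State) :
    (SP M S1 S2).tr (.ctrl s, .ctrl s) none (.busy s, .locked) :=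
  Or.inr (Or.inr ⟨rfl, DAct.t s true,
    Or.inr (Or.inr (Or.inr (Or.inl ⟨s, rfl⟩))),
    Or.inr (Or.inr (Or.inr (Or.inr ⟨s, rfl⟩))),
    CTr.hs s, CTr.lock s⟩)

lemma tau_hs2 (s : M.State) :
    (SP M S1 S2).tr (.ctrl s, .ctrl s) none (.locked, .busy s) :=
  Or.inr (Or.inr ⟨rfl, DAct.tbar s false,
    Or.inr (Or.inr (Or.inr (Or.inr ⟨s, rfl⟩))),
    Or.inr (Or.inr (Or.inr (Or.inl ⟨s, rfl⟩))),
    CTr.lock s, CTr.hs s⟩)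

lemma tau_cancel1 (s : M.State) :
    (SP M S1 S2).tr (.busy s, .locked) none (.ctrl s, .ctrl s) :=
  Or.inr (Or.inr ⟨rfl, DAct.c s true,
    Or.inr (Or.inl ⟨s, rfl⟩), Or.inr (Or.inr (Or.inl ⟨s, rfl⟩)),
    CTr.cancel s, CTr.unlock s⟩)

lemma tau_commit1 (s : M.State) :
    (SP M S1 S2).tr (.emit s, .locked) none (.ctrl s, .ctrl s) :=
  Or.inr (Or.inr ⟨rfl, DAct.c s true,
    Or.inr (Or.inl ⟨s, rfl⟩), Or.inr (Or.inr (Or.inl ⟨s, rfl⟩)),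
    CTr.commit s, CTr.unlock s⟩)

lemma tau_cancel2 (s : M.State) :
    (SP M S1 S2).tr (.locked, .busy s) none (.ctrl s, .ctrl s) :=
  Or.inr (Or.inr ⟨rfl, DAct.cbar s false,
    Or.inr (Or.inr (Or.inl ⟨s, rfl⟩)), Or.inr (Or.inl ⟨s, rfl⟩),
    CTr.unlock s, CTr.cancel s⟩)

lemma tau_commit2 (s : M.State) :
    (SP M S1 S2).tr (.locked, .emit s) none (.ctrl s, .ctrl s) :=
  Or.inr (Or.inr ⟨rfl, DAct.cbar s false,
    Or.inr (Or.inr (Or.inl ⟨s, rfl⟩)), Or.inr (Or.inl ⟨s, rfl⟩),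
    CTr.unlock s, CTr.commit s⟩)

lemma vis1 {s : M.State} {a : A} {s' : M.State} (h1 : a ∈ S1) (h : M.tr s (some a) s') :
    (SP M S1 S2).tr (.busy s, .locked) (some (.act a)) (.emit s', .locked) :=
  Or.inl ⟨DAct.act a, rfl, Or.inl ⟨a, h1, rfl⟩, coact_not_mem, CTr.doAct h1 h, rfl⟩

lemma vis2 {s : M.State} {a : A} {s' : M.State} (h2 : a ∈ S2) (h : M.tr s (some a) s') :
    (SP M S1 S2).tr (.locked, .busy s) (some (.act a)) (.locked, .emit s') :=
  Or.inr (Or.inl ⟨DAct.act a, rfl, Or.inl ⟨a, h2, rfl⟩, coact_not_mem, CTr.doAct h2 h, rfl⟩)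

/-- The branching bisimulation relation on product states. -/
def Rel (s : M.State) (p : CState M.State × CState M.State) : Prop :=
  p = (.ctrl s, .ctrl s) ∨ p = (.busy s, .locked) ∨ p = (.emit s, .locked) ∨
  p = (.locked, .busy s) ∨ p = (.locked, .emit s)

/-- The branching bisimulation relation on the disjoint union. -/
def BR : (M.State ⊕ (CState M.State × CState M.State)) →
    (M.State ⊕ (CState M.State × CState M.State)) → Prop :=
  fun x y =>
    match x, y with
    | .inl s, .inr p => Rel M s p
    | _, _ => False

lemma toCtrl {s : M.State} {p : CState M.State × CState M.State} (h : Rel M s p) :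
    tauStar (SP M S1 S2).tr p (.ctrl s, .ctrl s) := by
  rcases h with rfl | rfl | rfl | rfl | rfl
  · exact .refl
  · exact .single (tau_cancel1 M S1 S2 s)
  · exact .single (tau_commit1 M S1 S2 s)
  · exact .single (tau_cancel2 M S1 S2 s)
  · exact .single (tau_commit2 M S1 S2 s)

lemma toBusy1 {s : M.State} {p : CState M.State × CState M.State} (h : Rel M s p) :
    tauStar (SP M S1 S2).tr p (.busy s, .locked) :=
  (toCtrl M S1 S2 h).tail (tau_hs1 M S1 S2 s)

lemma toBusy2 {s : M.State} {p : CState M.State × CState M.State} (h : Rel M s p) :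
    tauStar (SP M S1 S2).tr p (.locked, .busy s) :=
  (toCtrl M S1 S2 h).tail (tau_hs2 M S1 S2 s)

lemma tauStar_inr {p q : CState M.State × CState M.State}
    (h : tauStar (SP M S1 S2).tr p q) :
    tauStar (sumTr (liftLTS M) (SP M S1 S2)) (.inr p) (.inr q) :=
  Relation.ReflTransGen.lift Sum.inr (fun _ _ hr => hr) p q h

lemma bisim (hU : M.alphabet = S1 ∪ S2) (hWf : WfLTS M) :
    IsBranchingBisimulation (sumTr (liftLTS M) (SP M S1 S2)) (BR M) := by
  rintro x y hR
  rcases x with s | q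
  · rcases y with t | p
    · exact hR.elim
    · have hRel : Rel M s p := hR
      constructor
      · -- moves of the original system
        intro a s' htr
        rcases s' with s₁ | p'
        · have htr' : ∃ b, M.tr s b s₁ ∧ a = Option.map DAct.act b := htr
          obtain ⟨b, hb, ha⟩ := htr'
          subst ha
          obtain ⟨b0, hb0, rfl⟩ := hWf _ _ _ hb
          right
          have hmem : b0 ∈ S1 ∪ S2 := hU ▸ hb0
          rcases hmem with h1 | h2
          · exact ⟨.inr (.busy s, .locked), .inr (.emit s₁, .locked),
              tauStar_inr M S1 S2 (toBusy1 M S1 S2 hRel),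
              vis1 M S1 S2 h1 hb,
              Or.inr (Or.inl rfl), Or.inr (Or.inr (Or.inl rfl))⟩
          · exact ⟨.inr (.locked, .busy s), .inr (.locked, .emit s₁),
              tauStar_inr M S1 S2 (toBusy2 M S1 S2 hRel),
              vis2 M S1 S2 h2 hb,
              Or.inr (Or.inr (Or.inr (Or.inl rfl))),
              Or.inr (Or.inr (Or.inr (Or.inr rfl)))⟩
        · exact htr.elim
      · -- moves of the product
        intro a y' htr
        rcases y' with s₁ | p'
        · exact htr.elim
        · obtain ⟨p1, p2⟩ := p'
          have htr' : (SP M S1 S2).tr p a (p1, p2) := htr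
          rcases hRel with rfl | rfl | rfl | rfl | rfl
          · -- (ctrl s, ctrl s)
            rcases sync_tr_cases _ _ _ htr' with
              ⟨a0, rfl, hmem, hbar, h1, heq⟩ | ⟨a0, rfl, hmem, hbar, h2, heq⟩ |
              ⟨rfl, a0, hmem, hbar, h1, h2⟩
            · cases h1 with
              | hs => exact absurd (Or.inr (Or.inr (Or.inr (Or.inr ⟨s, rfl⟩)))) hbar
              | lock => exact absurd (Or.inr (Or.inr (Or.inr (Or.inl ⟨s, rfl⟩)))) hbar
            · cases h2 with
              | hs => exact absurd (Or.inr (Or.inr (Or.inr (Or.inr ⟨s, rfl⟩)))) hbar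
              | lock => exact absurd (Or.inr (Or.inr (Or.inr (Or.inl ⟨s, rfl⟩)))) hbar
            · cases h1 with
              | hs =>
                simp only [DAct.bar] at h2
                cases h2
                exact Or.inl ⟨rfl, Or.inr (Or.inl rfl)⟩
              | lock =>
                simp only [DAct.bar] at h2
                cases h2
                exact Or.inl ⟨rfl, Or.inr (Or.inr (Or.inr (Or.inl rfl)))⟩
          · -- (busy s, locked)
            rcases sync_tr_cases _ _ _ htr' with
              ⟨a0, rfl, hmem, hbar, h1, heq⟩ | ⟨a0, rfl, hmem, hbar, h2, heq⟩ |
              ⟨rfl, a0, hmem, hbar, h1, h2⟩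
            · cases h1 with
              | doAct ha1 hstep =>
                subst heq
                exact Or.inr ⟨.inl s, .inl _, .refl, ⟨some _, hstep, rfl⟩,
                  Or.inr (Or.inl rfl), Or.inr (Or.inr (Or.inl rfl))⟩
              | cancel => exact absurd (Or.inr (Or.inr (Or.inl ⟨s, rfl⟩))) hbar
            · cases h2 with
              | unlock u => exact absurd (Or.inr (Or.inl ⟨u, rfl⟩)) hbar
            · cases h1 with
              | doAct ha1 hstep => exact absurd hbar coact_not_mem
              | cancel =>
                simp only [DAct.bar] at h2
                cases h2
                exact Or.inl ⟨rfl, Or.inl rfl⟩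
          · -- (emit s, locked)
            rcases sync_tr_cases _ _ _ htr' with
              ⟨a0, rfl, hmem, hbar, h1, heq⟩ | ⟨a0, rfl, hmem, hbar, h2, heq⟩ |
              ⟨rfl, a0, hmem, hbar, h1, h2⟩
            · cases h1 with
              | commit => exact absurd (Or.inr (Or.inr (Or.inl ⟨s, rfl⟩))) hbar
            · cases h2 with
              | unlock u => exact absurd (Or.inr (Or.inl ⟨u, rfl⟩)) hbar
            · cases h1 with
              | commit =>
                simp only [DAct.bar] at h2
                cases h2
                exact Or.inl ⟨rfl, Or.inl rfl⟩
          · -- (locked, busy s)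
            rcases sync_tr_cases _ _ _ htr' with
              ⟨a0, rfl, hmem, hbar, h1, heq⟩ | ⟨a0, rfl, hmem, hbar, h2, heq⟩ |
              ⟨rfl, a0, hmem, hbar, h1, h2⟩
            · cases h1 with
              | unlock u => exact absurd (Or.inr (Or.inl ⟨u, rfl⟩)) hbar
            · cases h2 with
              | doAct ha2 hstep =>
                subst heq
                exact Or.inr ⟨.inl s, .inl _, .refl, ⟨some _, hstep, rfl⟩,
                  Or.inr (Or.inr (Or.inr (Or.inl rfl))),
                  Or.inr (Or.inr (Or.inr (Or.inr rfl)))⟩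
              | cancel => exact absurd (Or.inr (Or.inr (Or.inl ⟨s, rfl⟩))) hbar
            · cases h1 with
              | unlock u =>
                simp only [DAct.bar] at h2
                cases h2
                exact Or.inl ⟨rfl, Or.inl rfl⟩
          · -- (locked, emit s)
            rcases sync_tr_cases _ _ _ htr' with
              ⟨a0, rfl, hmem, hbar, h1, heq⟩ | ⟨a0, rfl, hmem, hbar, h2, heq⟩ |
              ⟨rfl, a0, hmem, hbar, h1, h2⟩
            · cases h1 with
              | unlock u => exact absurd (Or.inr (Or.inl ⟨u, rfl⟩)) hbar
            · cases h2 with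
              | commit => exact absurd (Or.inr (Or.inr (Or.inl ⟨s, rfl⟩))) hbar
            · cases h1 with
              | unlock u =>
                simp only [DAct.bar] at h2
                cases h2
                exact Or.inl ⟨rfl, Or.inl rfl⟩
  · rcases y with t | p <;> exact hR.elim

end

end SyncDecomp

/-- There is a general (synchronous) decomposition operator `G` — producing, for every
LTS `M` and partition `Σ = Σ1 ∪ Σ2`, `Σ1 ∩ Σ2 = ∅`, two components whose alphabets
extend `Σ1` resp. `Σ2` and are disjoint from `Σ2` resp. `Σ1` — such that `M` is always
branching bisimilar to the synchronous product of the two components. -/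
theorem exists_sync_general_decomposition (A : Type) :
    ∃ G : (M : LTS A) → Set A → Set A → LTS (DAct A M.State) × LTS (DAct A M.State),
      ∀ (M : LTS A) (S1 S2 : Set A),
        M.alphabet = S1 ∪ S2 → S1 ∩ S2 = ∅ → WfLTS M →
        ({x | ∃ a ∈ S1, x = DAct.act a} ⊆ (G M S1 S2).1.alphabet ∧
         (G M S1 S2).1.alphabet ∩ {x | ∃ a ∈ S2, x = DAct.act a} = ∅ ∧
         {x | ∃ a ∈ S2, x = DAct.act a} ⊆ (G M S1 S2).2.alphabet ∧
         (G M S1 S2).2.alphabet ∩ {x | ∃ a ∈ S1, x = DAct.act a} = ∅) ∧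
        BranchingBisimilar (liftLTS M)
          (sync DAct.bar (G M S1 S2).1 (G M S1 S2).2) := by
  
  refine ⟨fun M S1 S2 => (SyncDecomp.comp M S1 true, SyncDecomp.comp M S2 false), ?_⟩
  intro M S1 S2 hU hDisj hWf
  refine ⟨⟨?_, ?_, ?_, ?_⟩, ?_⟩
  · rintro x ⟨a, ha, rfl⟩
    exact Or.inl ⟨a, ha, rfl⟩
  · apply Set.eq_empty_iff_forall_notMem.mpr
    rintro x ⟨hx, a, ha2, rfl⟩
    have ha1 : a ∈ S1 := by
      have hx' : (DAct.act a : DAct A M.State) ∈ decompAlphabet S1 true := hx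
      simpa using hx'
    have hmem : a ∈ S1 ∩ S2 := ⟨ha1, ha2⟩
    rw [hDisj] at hmem
    exact hmem
  · rintro x ⟨a, ha, rfl⟩
    exact Or.inl ⟨a, ha, rfl⟩
  · apply Set.eq_empty_iff_forall_notMem.mpr
    rintro x ⟨hx, a, ha1, rfl⟩
    have ha2 : a ∈ S2 := by
      have hx' : (DAct.act a : DAct A M.State) ∈ decompAlphabet S2 false := hx
      simpa using hx'
    have hmem : a ∈ S1 ∩ S2 := ⟨ha1, ha2⟩
    rw [hDisj] at hmem
    exact hmem
  · exact ⟨SyncDecomp.BR M, SyncDecomp.bisim M S1 S2 hU hWf, Or.inl rfl⟩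
end

section
/- Let P be the LTS ({p, r, s}, Σ₁ ∪ Σ₂, →, p) with Σ₁ = {a}, Σ₂ = {b}, and transitions p →^a r and p →^b s only. Let P₁ and P₂ be any two LTSs with action sets Σ_{P₁} and Σ_{P₂} such that Σ₁ ⊆ Σ_{P₁}, Σ₂ ⊆ Σ_{P₂}, and Σ₁ ∩ Σ₂ = Σ₁ ∩ Σ_{P₂} = Σ_{P₁} ∩ Σ₂ = ∅. Let P_x be the synchronous product P₁ × P₂. Then P is not divergence-preserving branching bisimilar to P_x, i.e. P ↮_db P_x. -/
/-- A state is divergent iff an infinite sequence of τ-transitions starts at it. -/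
def Divergent {Act S : Type} (tr : S → Option Act → S → Prop) (s : S) : Prop :=
  ∃ f : ℕ → S, f 0 = s ∧ ∀ n, tr (f n) none (f (n + 1))

/-- `R` is a divergence-preserving branching bisimulation relation. -/
def IsDPBranchingBisimulation {Act S : Type} (tr : S → Option Act → S → Prop)
    (R : S → S → Prop) : Prop :=
  IsBranchingBisimulation tr R ∧
  ∀ s t, R s t →
    ((∃ f : ℕ → S, f 0 = s ∧ (∀ n, tr (f n) none (f (n + 1))) ∧ ∀ n, 0 < n → R (f n) t) ↔
     (∃ g : ℕ → S, g 0 = t ∧ (∀ n, tr (g n) none (g (n + 1))) ∧ ∀ n, 0 < n → R s (g n)))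

/-- Two LTSs are divergence-preserving branching bisimilar iff their initial states
are related by some divergence-preserving branching bisimulation relation
on their disjoint union. -/
def DPBranchingBisimilar {Act : Type} (M N : LTS Act) : Prop :=
  ∃ R, IsDPBranchingBisimulation (sumTr M N) R ∧ R (Sum.inl M.init) (Sum.inr N.init)

/-- The states of the LTS `P` of Lemma 2 of the paper. -/
inductive PState : Type where
  | p : PState
  | r : PState
  | s : PState

/-- The LTS `P` with alphabet `{a} ∪ {b}` and transitions `p →a r` and `p →b s` only. -/
def PLTS {Act : Type} (a b : Act) : LTS Act where
  State := PState
  alphabet := {a, b}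
  tr := fun x l y =>
    (x = PState.p ∧ l = some a ∧ y = PState.r) ∨
    (x = PState.p ∧ l = some b ∧ y = PState.s)
  init := PState.p

/-- Lemma 2 of the paper: for any components `P1`, `P2` with `Σ1 ⊆ Σ_{P1}`,
`Σ2 ⊆ Σ_{P2}` and `Σ1 ∩ Σ2 = Σ1 ∩ Σ_{P2} = Σ_{P1} ∩ Σ2 = ∅`, the LTS `P` is not
divergence-preserving branching bisimilar to the synchronous product `P1 × P2`. -/
theorem P_not_dpbb_decomposable {Act : Type} (bar : Act → Act)
    (hbar : Function.Involutive bar) (a b : Act) (hab : a ≠ b)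
    (P1 P2 : LTS Act)
    (h1 : a ∈ P1.alphabet) (h2 : b ∈ P2.alphabet)
    (h3 : a ∉ P2.alphabet) (h4 : b ∉ P1.alphabet) :
    ¬ DPBranchingBisimilar (PLTS a b) (sync bar P1 P2) := by
  rintro ⟨R, ⟨hB, hD⟩, hR0⟩
  have hp_notau : ∀ y, ¬ sumTr (PLTS a b) (sync bar P1 P2) (Sum.inl PState.p) none y := by
    rintro (y | y) h
    · rcases h with ⟨_, h, _⟩ | ⟨_, h, _⟩ <;> exact nomatch h
    · exact h
  have hr_notrans : ∀ l y, ¬ sumTr (PLTS a b) (sync bar P1 P2) (Sum.inl PState.r) l y := by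
    rintro l (y | y) h
    · rcases h with ⟨h, _⟩ | ⟨h, _⟩ <;> exact PState.noConfusion h
    · exact h
  have htaup : ∀ s', tauStar (sumTr (PLTS a b) (sync bar P1 P2)) (Sum.inl PState.p) s' →
      s' = Sum.inl PState.p := by
    intro s' h
    rcases Relation.ReflTransGen.cases_head h with h' | ⟨c, hc, _⟩
    · exact h'.symm
    · exact absurd hc (hp_notau c)
  have htaur : ∀ s', tauStar (sumTr (PLTS a b) (sync bar P1 P2)) (Sum.inl PState.r) s' →
      s' = Sum.inl PState.r := by
    intro s' h
    rcases Relation.ReflTransGen.cases_head h with h' | ⟨c, hc, _⟩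
    · exact h'.symm
    · exact absurd hc (hr_notrans none c)
  have hstep : ∀ t t', R (Sum.inl PState.p) t →
      sumTr (PLTS a b) (sync bar P1 P2) t none t' → R (Sum.inl PState.p) t' := by
    intro t t' hR h
    rcases (hB _ _ hR).2 none t' h with ⟨_, h'⟩ | ⟨s', s'', hts, hs, _, _⟩
    · exact h'
    · have := htaup s' hts
      subst this
      exact absurd hs (hp_notau s'')
  have hreach : ∀ t, tauStar (sumTr (PLTS a b) (sync bar P1 P2))
      (Sum.inr (sync bar P1 P2).init) t → R (Sum.inl PState.p) t := by
    intro t h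
    induction h with
    | refl => exact hR0
    | tail h1 h2 ih => exact hstep _ _ ih h2
  have hinr : ∀ (x : (sync bar P1 P2).State) t,
      tauStar (sumTr (PLTS a b) (sync bar P1 P2)) (Sum.inr x) t → ∃ y, t = Sum.inr y := by
    intro x t h
    induction h with
    | refl => exact ⟨x, rfl⟩
    | @tail u c h1 h2 ih =>
      obtain ⟨y, rfl⟩ := ih
      cases c with
      | inl z => exact h2.elim
      | inr z => exact ⟨z, rfl⟩
  have hnf : ∃ t, tauStar (sumTr (PLTS a b) (sync bar P1 P2)) (Sum.inr (sync bar P1 P2).init) t ∧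
      ∀ t', ¬ sumTr (PLTS a b) (sync bar P1 P2) t none t' := by
    by_contra h
    push_neg at h
    choose F hF using h
    let g : ℕ → {x // tauStar (sumTr (PLTS a b) (sync bar P1 P2))
        (Sum.inr (sync bar P1 P2).init) x} := fun n =>
      Nat.rec ⟨Sum.inr (sync bar P1 P2).init, Relation.ReflTransGen.refl⟩
        (fun _ p => ⟨F p.1 p.2, p.2.tail (hF p.1 p.2)⟩) n
    have hRHS : ∃ g' : ℕ → _, g' 0 = Sum.inr (sync bar P1 P2).init ∧
        (∀ n, sumTr (PLTS a b) (sync bar P1 P2) (g' n) none (g' (n + 1))) ∧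
        ∀ n, 0 < n → R (Sum.inl PState.p) (g' n) :=
      ⟨fun n => (g n).1, rfl, fun n => hF _ _, fun n _ => hreach _ (g n).2⟩
    obtain ⟨f, hf0, hfs, _⟩ := (hD _ _ hR0).mpr hRHS
    exact hp_notau _ (hf0 ▸ hfs 0)
  obtain ⟨tstar, hreach_t, hnorm⟩ := hnf
  have hRt : R (Sum.inl PState.p) tstar := hreach _ hreach_t
  obtain ⟨⟨q, r0⟩, rfl⟩ := hinr _ _ hreach_t
  -- match the a-transition of p
  have htrA : sumTr (PLTS a b) (sync bar P1 P2) (Sum.inl PState.p) (some a)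
      (Sum.inl PState.r) := Or.inl ⟨rfl, rfl, rfl⟩
  rcases (hB _ _ hRt).1 (some a) _ htrA with ⟨h, _⟩ | ⟨t', t'', hts, htr', _, hRr⟩
  · exact nomatch h
  have ht'eq : t' = Sum.inr (q, r0) := by
    rcases Relation.ReflTransGen.cases_head hts with h' | ⟨c, hc, _⟩
    · exact h'.symm
    · exact absurd hc (hnorm c)
  subst ht'eq
  rcases t'' with y | ⟨q', r2⟩
  · exact htr'.elim
  have hr2 : r2 = r0 := by
    rcases htr' with ⟨a', ha', _, _, _, h'⟩ | ⟨a', ha', haP2, _⟩ | ⟨h', _⟩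
    · exact h'
    · injection ha' with h''
      subst h''
      exact absurd haP2 h3
    · exact nomatch h'
  subst hr2
  -- match the b-transition of p
  have htrB : sumTr (PLTS a b) (sync bar P1 P2) (Sum.inl PState.p) (some b)
      (Sum.inl PState.s) := Or.inr ⟨rfl, rfl, rfl⟩
  rcases (hB _ _ hRt).1 (some b) _ htrB with ⟨h, _⟩ | ⟨t2', t2'', hts2, htr2, _, _⟩
  · exact nomatch h
  have ht2eq : t2' = Sum.inr (q, r2) := by
    rcases Relation.ReflTransGen.cases_head hts2 with h' | ⟨c, hc, _⟩
    · exact h'.symm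
    · exact absurd hc (hnorm c)
  subst ht2eq
  rcases t2'' with y | ⟨q1, r'⟩
  · exact htr2.elim
  have hbstep : bar b ∉ P1.alphabet ∧ P2.tr r2 (some b) r' := by
    rcases htr2 with ⟨b', hb', hbP1, _⟩ | ⟨b', hb', hbP2, hbarb, htrr, _⟩ | ⟨h', _⟩
    · injection hb' with h''
      subst h''
      exact absurd hbP1 h4
    · injection hb' with h''
      subst h''
      exact ⟨hbarb, htrr⟩
    · exact nomatch h'
  obtain ⟨hbarb, htrr⟩ := hbstep
  -- contradiction: the product state matched with r can still do b
  have htrb : sumTr (PLTS a b) (sync bar P1 P2) (Sum.inr (q', r2)) (some b)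
      (Sum.inr (q', r')) := Or.inr (Or.inl ⟨b, rfl, h2, hbarb, htrr, rfl⟩)
  rcases (hB _ _ hRr).2 (some b) _ htrb with ⟨h, _⟩ | ⟨s', s'', hss, hs'', _, _⟩
  · exact nomatch h
  · have := htaur s' hss
    subst this
    exact hr_notrans _ _ hs''
end

section
/- There is no decomposition operation that maintains divergence-preserving branching bisimilarity over all LTSs: there is no general decomposition operator G such that for every LTS M = (S, Σ, →, q) and all alphabets Σ₁, Σ₂ with Σ = Σ₁ ∪ Σ₂ and Σ₁ ∩ Σ₂ = ∅, writing (M₁, M₂) = G(M, Σ₁, Σ₂), the LTS M is divergence-preserving branching bisimilar to the synchronous product M₁ × M₂. -/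
/-- Theorem 3 of the paper: there is no general decomposition operator `G` —
producing, for every LTS `M` and partition `Σ = Σ1 ∪ Σ2`, `Σ1 ∩ Σ2 = ∅`, two
components whose alphabets extend `Σ1` resp. `Σ2` and are disjoint from `Σ2` resp.
`Σ1` — such that `M` is always divergence-preserving branching bisimilar to the
synchronous product of the two components. -/
theorem no_dpbb_general_decomposition {Act : Type} (bar : Act → Act)
    (hbar : Function.Involutive bar) (hAct : ∃ a b : Act, a ≠ b) :
    ¬ ∃ G : LTS Act → Set Act → Set Act → LTS Act × LTS Act,
        ∀ (M : LTS Act) (S1 S2 : Set Act),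
          M.alphabet = S1 ∪ S2 → S1 ∩ S2 = ∅ → WfLTS M →
          (S1 ⊆ (G M S1 S2).1.alphabet ∧ (G M S1 S2).1.alphabet ∩ S2 = ∅ ∧
           S2 ⊆ (G M S1 S2).2.alphabet ∧ (G M S1 S2).2.alphabet ∩ S1 = ∅) ∧
          DPBranchingBisimilar M (sync bar (G M S1 S2).1 (G M S1 S2).2) := by
  classical
  rintro ⟨G, hG⟩
  obtain ⟨a, b, hab⟩ := hAct
  set M : LTS Act :=
    { State := Bool
      alphabet := {a, b}
      tr := fun s l s' => s = false ∧ s' = true ∧ (l = some a ∨ l = some b)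
      init := false } with hMdef
  have halph : M.alphabet = {a} ∪ {b} := by
    rw [Set.singleton_union]
  have hdisj : ({a} : Set Act) ∩ ({b} : Set Act) = ∅ := by
    ext x
    simp only [Set.mem_inter_iff, Set.mem_singleton_iff, Set.mem_empty_iff_false, iff_false,
      not_and]
    rintro rfl
    exact hab
  have hwf : WfLTS M := by
    rintro s l s' ⟨-, -, h | h⟩
    · exact ⟨a, by simp [hMdef], h⟩
    · exact ⟨b, by simp [hMdef], h⟩
  have hGall := hG M {a} {b} halph hdisj hwf
  set M1 := (G M {a} {b}).1 with hM1def
  set M2 := (G M {a} {b}).2 with hM2def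
  set P := sync bar M1 M2 with hPdef
  obtain ⟨⟨ha1, h1b, hb2, h2a⟩, R, ⟨hbis, hdiv⟩, hR0⟩ := hGall
  have haM1 : a ∈ M1.alphabet := ha1 rfl
  have haM2 : a ∉ M2.alphabet := fun h =>
    (Set.eq_empty_iff_forall_notMem.mp h2a a) ⟨h, rfl⟩
  have hbM2 : b ∈ M2.alphabet := hb2 rfl
  have hbM1 : b ∉ M1.alphabet := fun h =>
    (Set.eq_empty_iff_forall_notMem.mp h1b b) ⟨h, rfl⟩
  -- no τ from any inl state
  have hMnoTau : ∀ (s : Bool) (x : M.State ⊕ P.State), ¬ sumTr M P (Sum.inl s) none x := by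
    rintro s (x | x) h
    · rcases h with ⟨-, -, h | h⟩ <;> cases h
    · exact h
  -- inl true has no transitions at all
  have hTrueNoTr : ∀ (l : Option Act) (x : M.State ⊕ P.State),
      ¬ sumTr M P (Sum.inl true) l x := by
    rintro l (x | x) h
    · exact Bool.noConfusion h.1
    · exact h
  -- τ-steps from states related to inl false stay related
  have claimA : ∀ (p x : P.State), R (Sum.inl false) (Sum.inr p) → P.tr p none x →
      R (Sum.inl false) (Sum.inr x) := by
    intro p x hp hx
    rcases (hbis _ _ hp).2 none (Sum.inr x) hx with ⟨-, h⟩ | ⟨s', s'', hst, htr, -, -⟩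
    · exact h
    · rcases hst.cases_head with h1 | ⟨y, hy, -⟩
      · subst h1
        exact absurd htr (hMnoTau false s'')
      · exact absurd hy (hMnoTau false y)
  -- no infinite τ-sequence through states related to inl false
  have hnodiv : ∀ p : P.State, R (Sum.inl false) (Sum.inr p) →
      ¬ ∃ g : ℕ → P.State, g 0 = p ∧ (∀ n, P.tr (g n) none (g (n + 1))) ∧
        ∀ n, R (Sum.inl false) (Sum.inr (g n)) := by
    rintro p hp ⟨g, hg0, hgs, hgr⟩
    have h2 : ∃ g' : ℕ → (M.State ⊕ P.State), g' 0 = Sum.inr p ∧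
        (∀ n, sumTr M P (g' n) none (g' (n + 1))) ∧
        ∀ n, 0 < n → R (Sum.inl false) (g' n) := by
      refine ⟨fun n => Sum.inr (g n), congrArg Sum.inr hg0, fun n => hgs n, fun n _ => hgr n⟩
    obtain ⟨f, hf0, hfs, -⟩ := (hdiv (Sum.inl false) (Sum.inr p) hp).mpr h2
    have := hfs 0
    rw [hf0] at this
    exact hMnoTau false (f 1) this
  -- there is a τ-deadlocked state related to inl false
  have hC : ∃ p : P.State, R (Sum.inl false) (Sum.inr p) ∧ ∀ x, ¬ P.tr p none x := by
    by_contra h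
    push_neg at h
    have hR0' : R (Sum.inl false) (Sum.inr P.init) := hR0
    let F : ℕ → {p : P.State // R (Sum.inl false) (Sum.inr p)} := fun n =>
      Nat.rec ⟨P.init, hR0'⟩
        (fun _ ih => ⟨Classical.choose (h ih.1 ih.2),
          claimA ih.1 _ ih.2 (Classical.choose_spec (h ih.1 ih.2))⟩) n
    refine hnodiv P.init hR0' ⟨fun n => (F n).1, rfl, fun n => ?_, fun n => (F n).2⟩
    exact Classical.choose_spec (h (F n).1 (F n).2)
  obtain ⟨p, hp, hpno⟩ := hC
  -- the a-transition of M must be matched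
  have haStep : sumTr M P (Sum.inl false) (some a) (Sum.inl true) :=
    ⟨rfl, rfl, Or.inl rfl⟩
  have hbStep : sumTr M P (Sum.inl false) (some b) (Sum.inl true) :=
    ⟨rfl, rfl, Or.inr rfl⟩
  have hmatch : ∀ (c : Act), sumTr M P (Sum.inl false) (some c) (Sum.inl true) →
      ∃ pc : P.State, P.tr p (some c) pc ∧ R (Sum.inl true) (Sum.inr pc) := by
    intro c hc
    rcases (hbis _ _ hp).1 (some c) (Sum.inl true) hc with ⟨h', -⟩ | ⟨t', t'', hst, htr, -, hRc⟩
    · exact (Option.some_ne_none _ h').elim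
    · have ht' : t' = Sum.inr p := by
        rcases hst.cases_head with h1 | ⟨y, hy, -⟩
        · exact h1.symm
        · exfalso
          rcases y with y | y
          · exact hy
          · exact hpno y hy
      subst ht'
      rcases t'' with u | pc
      · exact absurd htr id
      · exact ⟨pc, htr, hRc⟩
  obtain ⟨pa, hpa, hRa⟩ := hmatch a haStep
  obtain ⟨pb, hpb, -⟩ := hmatch b hbStep
  -- the a-transition is a move of the first component only
  have hpa' : M1.tr p.1 (some a) pa.1 ∧ pa.2 = p.2 := by
    rcases hpa with ⟨c, hc, -, -, h1, h2⟩ | ⟨c, hc, hcM2, -, -, -⟩ | ⟨hne, -⟩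
    · obtain rfl : c = a := (Option.some.inj hc).symm
      exact ⟨h1, h2⟩
    · obtain rfl : c = a := (Option.some.inj hc).symm
      exact absurd hcM2 haM2
    · exact (Option.some_ne_none _ hne).elim
  -- the b-transition is a move of the second component only
  have hpb' : M2.tr p.2 (some b) pb.2 ∧ bar b ∉ M1.alphabet := by
    rcases hpb with ⟨c, hc, hcM1, -, -, -⟩ | ⟨c, hc, -, hbar, h1, -⟩ | ⟨hne, -⟩
    · obtain rfl : c = b := (Option.some.inj hc).symm
      exact absurd hcM1 hbM1
    · obtain rfl : c = b := (Option.some.inj hc).symm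
      exact ⟨h1, hbar⟩
    · exact (Option.some_ne_none _ hne).elim
  -- but then after a, b is still enabled
  have hstep2 : P.tr pa (some b) (pa.1, pb.2) := by
    refine Or.inr (Or.inl ⟨b, rfl, hbM2, hpb'.2, ?_, rfl⟩)
    show M2.tr pa.2 (some b) pb.2
    rw [hpa'.2]
    exact hpb'.1
  have hstep2' : sumTr M P (Sum.inr pa) (some b) (Sum.inr (pa.1, pb.2)) := hstep2
  rcases (hbis _ _ hRa).2 (some b) (Sum.inr (pa.1, pb.2)) hstep2' with
    ⟨h', -⟩ | ⟨s', s'', hst, htr, -, -⟩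
  · exact Option.some_ne_none _ h'
  · rcases hst.cases_head with h1 | ⟨y, hy, -⟩
    · subst h1
      exact hTrueNoTr (some b) s'' htr
    · exact hTrueNoTr none y hy
end

section
/- Let M = (S, Σ, →, q) be an LTS, Σ₁, Σ₂ alphabets with Σ = Σ₁ ∪ Σ₂ and Σ₁ ∩ Σ₂ = ∅, let (M₁, M₂) = decomp_s(M, Σ₁, Σ₂) be the synchronous decomposition, and let M_x = M₁ × M₂ be the synchronous product. Then for every s ∈ S and every i ∈ {↑, ↓}, the product state (s_i, s_i) is divergent in M_x: in particular (s_↑, s_↑) →_x^τ (s_↓, s_↓) →_x^τ (s_↑, s_↑), yielding an infinite τ-sequence from (s_i, s_i). -/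
/-- In the synchronous product of the synchronous decomposition `decomp_s`, for every
state `s` of `M` and each index `i`, the product state `(s_i, s_i)` is divergent: in
particular `(s_↑,s_↑) →τ (s_↓,s_↓) →τ (s_↑,s_↑)`, yielding an infinite τ-sequence. -/
theorem decompS_product_divergent {A : Type} (M : LTS A) (S1 S2 : Set A)
    (hcov : M.alphabet = S1 ∪ S2) (hdisj : S1 ∩ S2 = ∅) (hwf : WfLTS M) :
    ∀ s : M.State,
      (sync DAct.bar (decompS M S1 S2 true) (decompS M S1 S2 false)).tr
        (DState.ctrl s true, DState.ctrl s true) none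
        (DState.ctrl s false, DState.ctrl s false) ∧
      (sync DAct.bar (decompS M S1 S2 true) (decompS M S1 S2 false)).tr
        (DState.ctrl s false, DState.ctrl s false) none
        (DState.ctrl s true, DState.ctrl s true) ∧
      ∀ i : Bool,
        Divergent (sync DAct.bar (decompS M S1 S2 true) (decompS M S1 S2 false)).tr
          (DState.ctrl s i, DState.ctrl s i) := by

  intro s
  have h1 : (sync DAct.bar (decompS M S1 S2 true) (decompS M S1 S2 false)).tr
      (DState.ctrl s true, DState.ctrl s true) none
      (DState.ctrl s false, DState.ctrl s false) := by
    refine Or.inr (Or.inr ⟨rfl, DAct.c s true, ?_, ?_, ?_, ?_⟩)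
    · exact Or.inr (Or.inl ⟨s, rfl⟩)
    · exact Or.inr (Or.inr (Or.inl ⟨s, rfl⟩))
    · exact decompSTr.sendC s true
    · exact decompSTr.recvC s false
  have h2 : (sync DAct.bar (decompS M S1 S2 true) (decompS M S1 S2 false)).tr
      (DState.ctrl s false, DState.ctrl s false) none
      (DState.ctrl s true, DState.ctrl s true) := by
    refine Or.inr (Or.inr ⟨rfl, DAct.cbar s false, ?_, ?_, ?_, ?_⟩)
    · exact Or.inr (Or.inr (Or.inl ⟨s, rfl⟩))
    · exact Or.inr (Or.inl ⟨s, rfl⟩)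
    · exact decompSTr.recvC s true
    · exact decompSTr.sendC s false
  refine ⟨h1, h2, ?_⟩
  intro i
  refine ⟨fun n => if n % 2 = 0 then (DState.ctrl s i, DState.ctrl s i)
      else (DState.ctrl s (!i), DState.ctrl s (!i)), by simp; rfl, ?_⟩
  intro n
  rcases Nat.mod_two_eq_zero_or_one n with h | h
  · have h' : (n + 1) % 2 = 1 := by omega
    cases i <;> simp [h, h'] <;> assumption
  · have h' : (n + 1) % 2 = 0 := by omega
    cases i <;> simp [h, h'] <;> assumption
end
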